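/- arXiv:2206.00885 — 2 statements merged into one kernel-verified Lean document; each statement's English description precedes it below -/
import Mathlib

section
/- There exists a constant C > 0, depending only on the bounds C₂ and C₃, such that for every n ≥ 2, with probability at least 1 − C/n, the empirical average of squared treatment residuals satisfies |(1/n)·Σᵢ V̂ᵢ² − (Var(V₁) + E[(Δm̂(X₁))²])| ≤ C·√(log n / n). -/
/-!
The squared residuals `(Dᵢ - m̂(Xᵢ))² = (Vᵢ + Δm̂(Xᵢ))²` are i.i.d. with values in
`[0, B]`, `B = (C₂ + C₃)²`, so by Hoeffding's inequality their empirical mean deviates from its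
expectation by at least `ε` with probability at most `2 exp(-2nε²/B²)`; for `ε` a large multiple
of `√(log n / n)` this is `O(1/n)`. The expectation is `Var(V₁) + E[Δm̂(X₁)²]` because `V₁` is
centred and independent of `X₁`, which kills the cross term.
-/

open MeasureTheory ProbabilityTheory Real Finset
open scoped NNReal

lemma add_sq_le_sq_add_of_abs_le {x y a b : ℝ} (hx : |x| ≤ a) (hy : |y| ≤ b) :
    (x + y) ^ 2 ≤ (a + b) ^ 2 := by
  rw [← sq_abs (x + y)]
  exact pow_le_pow_left₀ (abs_nonneg _) ((abs_add_le x y).trans (add_le_add hx hy)) 2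

lemma exp_neg_mul_sqrt_log_div_sq_le {B c : ℝ} (hB : 0 < B) (hBc : B ≤ c) {n : ℕ} (hn : 0 < n) :
    exp (-2 * n * (c * √(log n / n)) ^ 2 / B ^ 2) ≤ 1 / n := by
  have hn' : (0 : ℝ) < n := Nat.cast_pos.2 hn
  have h_log : 0 ≤ log n := log_nonneg (Nat.one_le_cast.2 hn)
  have h_ratio : 1 ≤ c ^ 2 / B ^ 2 := (one_le_div (by positivity)).2 (by gcongr)
  have h_exponent :
      -2 * n * (c * √(log n / n)) ^ 2 / B ^ 2 = -2 * (c ^ 2 / B ^ 2) * log n := by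
    rw [mul_pow, sq_sqrt (by positivity)]
    field_simp
  calc exp (-2 * n * (c * √(log n / n)) ^ 2 / B ^ 2) ≤ exp (-log n) := by
        rw [h_exponent]; gcongr; nlinarith
    _ = 1 / n := by rw [exp_neg, exp_log hn', one_div]

namespace ProbabilityTheory

variable {Ω : Type*} {mΩ : MeasurableSpace Ω} {μ : Measure Ω}

lemma HasSubgaussianMGF.measure_abs_sum_range_ge_le_of_iIndepFun {X : ℕ → Ω → ℝ}
    (h_indep : iIndepFun X μ) {c : ℝ≥0} {n : ℕ}
    (h_subG : ∀ i < n, HasSubgaussianMGF (X i) c μ) {ε : ℝ} (hε : 0 ≤ ε) :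
    μ.real {ω | ε ≤ |∑ i ∈ range n, X i ω|} ≤ 2 * exp (-ε ^ 2 / (2 * n * c)) := by
  have : IsProbabilityMeasure μ := h_indep.isProbabilityMeasure
  have h_upper := measure_sum_range_ge_le_of_iIndepFun h_indep h_subG hε
  have h_lower := measure_sum_range_ge_le_of_iIndepFun (X := fun i ω ↦ -X i ω)
    (h_indep.comp (fun _ ↦ Neg.neg) fun _ ↦ measurable_neg) (fun i hi ↦ (h_subG i hi).neg) hε
  have h_split : {ω | ε ≤ |∑ i ∈ range n, X i ω|}
      ⊆ {ω | ε ≤ ∑ i ∈ range n, X i ω} ∪ {ω | ε ≤ ∑ i ∈ range n, -X i ω} := by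
    intro ω hω
    simp only [Set.mem_ofPred_eq, Set.mem_union, sum_neg_distrib] at hω ⊢
    rcases le_abs'.1 hω with h | h
    · exact Or.inr (by linarith)
    · exact Or.inl h
  calc μ.real {ω | ε ≤ |∑ i ∈ range n, X i ω|}
      ≤ μ.real {ω | ε ≤ ∑ i ∈ range n, X i ω} + μ.real {ω | ε ≤ ∑ i ∈ range n, -X i ω} :=
        (measureReal_mono h_split).trans (measureReal_union_le _ _)
    _ ≤ 2 * exp (-ε ^ 2 / (2 * n * c)) := by linarith

variable [IsProbabilityMeasure μ]

lemma measure_abs_sum_range_sub_integral_ge_le_of_mem_Icc {X : ℕ → Ω → ℝ}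
    (h_indep : iIndepFun X μ) (h_meas : ∀ i, AEMeasurable (X i) μ) {a b : ℝ}
    (h_bdd : ∀ i, ∀ᵐ ω ∂μ, X i ω ∈ Set.Icc a b) (n : ℕ) {ε : ℝ} (hε : 0 ≤ ε) :
    μ.real {ω | ε ≤ |∑ i ∈ range n, (X i ω - μ[X i])|}
      ≤ 2 * exp (-2 * ε ^ 2 / (n * (b - a) ^ 2)) := by
  have h_indep' := h_indep.comp (fun i (y : ℝ) ↦ y - μ[X i]) fun _ ↦ measurable_sub_const _
  refine (HasSubgaussianMGF.measure_abs_sum_range_ge_le_of_iIndepFun h_indep'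
    (fun i _ ↦ hasSubgaussianMGF_of_mem_Icc (h_meas i) (h_bdd i)) hε).trans_eq ?_
  congr 2
  push_cast
  rw [Real.norm_eq_abs, div_pow, sq_abs,
    show (2 : ℝ) * n * ((b - a) ^ 2 / 2 ^ 2) = n * (b - a) ^ 2 / 2 by ring, div_div_eq_mul_div]
  ring

lemma measure_abs_empiricalMean_sub_integral_ge_le {X : ℕ → Ω → ℝ}
    (h_indep : iIndepFun X μ) (h_ident : ∀ i, IdentDistrib (X i) (X 0) μ μ) {a b : ℝ}
    (h_bdd : ∀ i, ∀ᵐ ω ∂μ, X i ω ∈ Set.Icc a b) {n : ℕ} (hn : 0 < n) {ε : ℝ} (hε : 0 ≤ ε) :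
    μ.real {ω | ε ≤ |1 / (n : ℝ) * ∑ i ∈ range n, X i ω - μ[X 0]|}
      ≤ 2 * exp (-2 * n * ε ^ 2 / (b - a) ^ 2) := by
  have hn' : (0 : ℝ) < n := Nat.cast_pos.2 hn
  have h_sets : {ω | ε ≤ |1 / (n : ℝ) * ∑ i ∈ range n, X i ω - μ[X 0]|}
      = {ω | n * ε ≤ |∑ i ∈ range n, (X i ω - μ[X i])|} := by
    ext ω
    simp only [Set.mem_ofPred_eq, fun i ↦ (h_ident i).integral_eq, sum_sub_distrib, sum_const,
      card_range, nsmul_eq_mul]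
    rw [show 1 / (n : ℝ) * ∑ i ∈ range n, X i ω - μ[X 0]
        = (∑ i ∈ range n, X i ω - n * μ[X 0]) / n by field_simp,
      abs_div, abs_of_pos hn', le_div_iff₀ hn', mul_comm]
  rw [h_sets]
  refine (measure_abs_sum_range_sub_integral_ge_le_of_mem_Icc h_indep
    (fun i ↦ (h_ident i).aemeasurable_fst) h_bdd n (by positivity)).trans_eq ?_
  rw [show -2 * (n * ε) ^ 2 = -2 * n * ε ^ 2 * n by ring, mul_comm (n : ℝ) ((b - a) ^ 2),
    mul_div_mul_right _ _ hn'.ne']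

lemma integral_add_sq_of_indepFun {V A : Ω → ℝ} (hV : MemLp V 2 μ) (hA : MemLp A 2 μ)
    (hAV : IndepFun A V μ) (hV_mean : μ[V] = 0) :
    ∫ ω, (V ω + A ω) ^ 2 ∂μ = Var[V; μ] + ∫ ω, A ω ^ 2 ∂μ := by
  have h_sum := variance_eq_sub (hV.add hA)
  rw [hAV.symm.variance_add hV hA, variance_eq_sub hA,
    integral_add' (hV.integrable one_le_two) (hA.integrable one_le_two), hV_mean] at h_sum
  simp only [Pi.add_apply, Pi.pow_apply] at h_sum
  linarith

lemma one_sub_ofReal_le_measure_of_measureReal_compl_le {s : Set Ω} {δ : ℝ}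
    (h : μ.real sᶜ ≤ δ) : 1 - ENNReal.ofReal δ ≤ μ s := by
  have h_compl : μ sᶜ ≤ ENNReal.ofReal δ := by
    rw [← ofReal_measureReal]; exact ENNReal.ofReal_le_ofReal h
  calc 1 - ENNReal.ofReal δ ≤ 1 - μ sᶜ := tsub_le_tsub_left h_compl 1
    _ ≤ μ s := by
      rw [tsub_le_iff_right, ← measure_univ (μ := μ), ← Set.union_compl_self s]
      exact measure_union_le s sᶜ

lemma one_sub_le_measure_abs_empiricalMean_sub_integral_le {X : ℕ → Ω → ℝ}
    (h_indep : iIndepFun X μ) (h_ident : ∀ i, IdentDistrib (X i) (X 0) μ μ) {B : ℝ} (hB : 1 ≤ B)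
    (h_bdd : ∀ i, ∀ᵐ ω ∂μ, X i ω ∈ Set.Icc 0 B) {n : ℕ} (hn : 0 < n) :
    1 - ENNReal.ofReal (2 * B / n)
      ≤ μ {ω | |1 / (n : ℝ) * ∑ i ∈ range n, X i ω - μ[X 0]| ≤ 2 * B * √(log n / n)} := by
  set ε := 2 * B * √(log n / n)
  refine one_sub_ofReal_le_measure_of_measureReal_compl_le ?_
  calc μ.real {ω | |1 / (n : ℝ) * ∑ i ∈ range n, X i ω - μ[X 0]| ≤ ε}ᶜ
      ≤ μ.real {ω | ε ≤ |1 / (n : ℝ) * ∑ i ∈ range n, X i ω - μ[X 0]|} :=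
        measureReal_mono fun ω h ↦ by
          simp only [Set.mem_compl_iff, Set.mem_ofPred_eq, not_le] at h ⊢; exact h.le
    _ ≤ 2 * exp (-2 * n * ε ^ 2 / (B - 0) ^ 2) :=
        measure_abs_empiricalMean_sub_integral_ge_le h_indep h_ident h_bdd hn (by positivity)
    _ ≤ 2 * (1 / n) := by
        rw [sub_zero]
        gcongr
        exact exp_neg_mul_sqrt_log_div_sq_le (by positivity) (by linarith) hn
    _ ≤ 2 * B / n := by rw [mul_one_div]; gcongr; linarith

end ProbabilityTheory

/-- There exists a constant `C > 0`, depending only on the bounds `C₂`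
and `C₃`, such that for every `n ≥ 2`, with probability at least `1 − C/n`, the empirical
average of squared treatment residuals satisfies
`|(1/n)·Σᵢ V̂ᵢ² − (Var(V₁) + E[(Δm̂(X₁))²])| ≤ C·√(log n / n)`. -/
theorem dml_denominator_concentration (C₂ C₃ : ℝ) :
    ∃ C > (0 : ℝ), ∀ (Ω : Type) [MeasureSpace Ω],
      IsProbabilityMeasure (ℙ : Measure Ω) →
      ∀ (d : ℕ) (g m mhat : (Fin d → ℝ) → ℝ) (θ : ℝ)
        (X : ℕ → Ω → (Fin d → ℝ)) (D Y θ' U V : ℕ → Ω → ℝ),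
        Measurable g → Measurable m → Measurable mhat →
        (∀ i, Measurable (X i)) → (∀ i, Measurable (D i)) → (∀ i, Measurable (Y i)) →
        (∀ i, Measurable (θ' i)) → (∀ i, Measurable (U i)) → (∀ i, Measurable (V i)) →
        -- partially linear model
        (∀ i ω, Y i ω = g (X i ω) + D i ω * θ' i ω + U i ω) →
        (∀ i ω, D i ω = m (X i ω) + V i ω) →
        -- the samples (Xᵢ, Dᵢ, Yᵢ, θᵢ') are i.i.d.
        iIndepFun
          (fun i ω => (X i ω, D i ω, Y i ω, θ' i ω)) ℙ →
        (∀ i, IdentDistrib (fun ω => (X i ω, D i ω, Y i ω, θ' i ω))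
                (fun ω => (X 0 ω, D 0 ω, Y 0 ω, θ' 0 ω)) ℙ ℙ) →
        -- Uᵢ, Vᵢ, θᵢ' mutually independent and independent of Xᵢ
        (∀ i, iIndepFun ![U i, V i, θ' i] ℙ) →
        (∀ i, IndepFun (X i) (fun ω => (U i ω, V i ω, θ' i ω)) ℙ) →
        (∀ i, 𝔼[U i] = 0) → (∀ i, 𝔼[V i] = 0) → (∀ i, 𝔼[θ' i] = θ) →
        -- boundedness
        (∀ i, ∀ᵐ ω, |V i ω| ≤ C₂) →
        (∀ i, ∀ᵐ ω, |m (X i ω) - mhat (X i ω)| ≤ C₃) →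
        ∀ n : ℕ, 2 ≤ n →
        ℙ {ω | |(1 / (n : ℝ)) * (∑ i ∈ Finset.range n, (D i ω - mhat (X i ω)) ^ 2)
                - (Var[V 0] + 𝔼[fun ω' => (m (X 0 ω') - mhat (X 0 ω')) ^ 2])|
              ≤ C * Real.sqrt (Real.log n / n)}
          ≥ 1 - ENNReal.ofReal (C / n) := by
  set B : ℝ := (C₂ + C₃) ^ 2 + 1
  have hB : 1 ≤ B := le_add_of_nonneg_left (sq_nonneg _)
  refine ⟨2 * B, by positivity, ?_⟩
  intro Ω _ _ d g m mhat θ X D Y θ' U V _ hm hmhat hX hD _ _ _ hV _ hD_eq hiid hident _ hXUVθ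
    _ hV_mean _ hV_bdd hΔ_bdd n hn
  set W : ℕ → Ω → ℝ := fun i ω ↦ (D i ω - mhat (X i ω)) ^ 2
  have hres : ∀ i ω, D i ω - mhat (X i ω) = V i ω + (m (X i ω) - mhat (X i ω)) := by
    intro i ω; rw [hD_eq]; ring
  have hψ : Measurable fun p : (Fin d → ℝ) × ℝ × ℝ × ℝ ↦ (p.2.1 - mhat p.1) ^ 2 := by fun_prop
  have hW_indep : iIndepFun W ℙ := hiid.comp _ fun _ ↦ hψ
  have hW_ident : ∀ i, IdentDistrib (W i) (W 0) ℙ ℙ := fun i ↦ (hident i).comp hψ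
  have hW_bdd : ∀ i, ∀ᵐ ω, W i ω ∈ Set.Icc 0 B := by
    intro i
    filter_upwards [hV_bdd i, hΔ_bdd i] with ω hVω hΔω
    refine ⟨sq_nonneg _, ?_⟩
    rw [show W i ω = _ from congrArg (· ^ 2) (hres i ω)]
    exact (add_sq_le_sq_add_of_abs_le hVω hΔω).trans (le_add_of_nonneg_right zero_le_one)
  have hW_mean : 𝔼[W 0] = Var[V 0] + 𝔼[fun ω' => (m (X 0 ω') - mhat (X 0 ω')) ^ 2] := by
    simp only [W, hres]
    exact integral_add_sq_of_indepFun (MemLp.of_bound (hV 0).aestronglyMeasurable _ (hV_bdd 0))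
      (MemLp.of_bound ((hm.sub hmhat).comp (hX 0)).aestronglyMeasurable _ (hΔ_bdd 0))
      ((hXUVθ 0).comp (hm.sub hmhat) measurable_snd.fst) (hV_mean 0)
  rw [← hW_mean, ge_iff_le]
  exact one_sub_le_measure_abs_empiricalMean_sub_integral_le hW_indep hW_ident hB hW_bdd
    (by omega)
end

section
/- If Var(V) > 0, E[(Δm̂(X))²] ≤ η_m, and E[(Δℓ̂(X))²] ≤ η_ℓ for nonnegative reals η_m, η_ℓ, then the DML bias B_DML := (E[Δm̂(X)·Δℓ̂(X)] − θ·E[(Δm̂(X))²]) / (Var(V) + E[(Δm̂(X))²]) satisfies |B_DML| ≤ (√(η_m·η_ℓ) + |θ|·η_m) / Var(V). -/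
/-! Cauchy–Schwarz bounds the cross moment `E[Δm̂ Δℓ̂]` by `√(η_m η_ℓ)`; the rest is elementary,
since `E[(Δm̂)²] ≥ 0` only enlarges the denominator beyond `Var(V)`. -/

open MeasureTheory ProbabilityTheory

theorem abs_integral_mul_le_sqrt_integral_sq_mul_sqrt_integral_sq {α : Type*}
    [MeasurableSpace α] {μ : Measure α} {f g : α → ℝ} (hf : MemLp f 2 μ) (hg : MemLp g 2 μ) :
    |∫ a, f a * g a ∂μ| ≤ √(∫ a, f a ^ 2 ∂μ) * √(∫ a, g a ^ 2 ∂μ) := by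
  have two : ENNReal.ofReal 2 = 2 := by norm_num
  have holder := integral_mul_norm_le_Lp_mul_Lq (μ := μ) Real.HolderConjugate.two_two
    (two ▸ hf) (two ▸ hg)
  simp only [Real.norm_eq_abs, Real.rpow_two, sq_abs, ← Real.sqrt_eq_rpow] at holder
  calc |∫ a, f a * g a ∂μ| ≤ ∫ a, |f a * g a| ∂μ := abs_integral_le_integral_abs
    _ = ∫ a, |f a| * |g a| ∂μ := by simp only [abs_mul]
    _ ≤ _ := holder

theorem abs_sub_mul_div_add_le {a b θ v s η : ℝ} (ha : |a| ≤ s) (hb : 0 ≤ b) (hbη : b ≤ η)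
    (hv : 0 < v) : |(a - θ * b) / (v + b)| ≤ (s + |θ| * η) / v := by
  have hnum : |a - θ * b| ≤ s + |θ| * η :=
    calc |a - θ * b| ≤ |a| + |θ| * b := by simpa [abs_mul, abs_of_nonneg hb] using abs_sub a (θ * b)
      _ ≤ s + |θ| * η := by gcongr
  rw [abs_div, abs_of_pos (by linarith : 0 < v + b)]
  exact div_le_div₀ ((abs_nonneg _).trans hnum) hnum hv (by linarith)

theorem dml_bias_bound_consistency_general
    {Ω : Type*} [MeasureSpace Ω] [IsProbabilityMeasure (ℙ : Measure Ω)]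
    {d : ℕ} (X : Ω → (Fin d → ℝ)) (V : Ω → ℝ)
    (g m mhat lhat : (Fin d → ℝ) → ℝ) (θ : ℝ) (C₃ C₄ : ℝ)
    (hXm : Measurable X)
    (hg : Measurable g) (hm : Measurable m)
    (hmhat : Measurable mhat) (hlhat : Measurable lhat)
    -- `ℓ(x) := g(x) + θ·m(x)`, `Δm̂(x) := m(x) − m̂(x)`, `Δℓ̂(x) := ℓ(x) − ℓ̂(x)`.
    (ℓ Δmhat Δlhat : (Fin d → ℝ) → ℝ)
    (hℓ : ∀ x, ℓ x = g x + θ * m x)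
    (hΔm : ∀ x, Δmhat x = m x - mhat x)
    (hΔl : ∀ x, Δlhat x = ℓ x - lhat x)
    (hbΔm : ∀ᵐ ω, |Δmhat (X ω)| ≤ C₃) (hbΔl : ∀ᵐ ω, |Δlhat (X ω)| ≤ C₄)
    (ηm ηl : ℝ)
    (hVarV : 0 < Var[V])
    (hηm : 𝔼[fun ω => (Δmhat (X ω)) ^ 2] ≤ ηm)
    (hηl : 𝔼[fun ω => (Δlhat (X ω)) ^ 2] ≤ ηl) :
    |(𝔼[fun ω => Δmhat (X ω) * Δlhat (X ω)] - θ * 𝔼[fun ω => (Δmhat (X ω)) ^ 2])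
        / (Var[V] + 𝔼[fun ω => (Δmhat (X ω)) ^ 2])|
      ≤ (Real.sqrt (ηm * ηl) + |θ| * ηm) / Var[V] := by
  have hΔmhat : Measurable Δmhat := by rw [funext hΔm]; fun_prop
  have hΔlhat : Measurable Δlhat := by rw [funext hΔl, funext hℓ]; fun_prop
  have hmL2 : MemLp (fun ω => Δmhat (X ω)) 2 :=
    .of_bound (hΔmhat.comp hXm).aestronglyMeasurable C₃ (by simpa only [Real.norm_eq_abs])
  have hlL2 : MemLp (fun ω => Δlhat (X ω)) 2 :=
    .of_bound (hΔlhat.comp hXm).aestronglyMeasurable C₄ (by simpa only [Real.norm_eq_abs])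
  have hm0 : 0 ≤ 𝔼[fun ω => (Δmhat (X ω)) ^ 2] := integral_nonneg fun ω => sq_nonneg _
  have hcross : |𝔼[fun ω => Δmhat (X ω) * Δlhat (X ω)]| ≤ √(ηm * ηl) := by
    rw [Real.sqrt_mul (hm0.trans hηm)]
    exact (abs_integral_mul_le_sqrt_integral_sq_mul_sqrt_integral_sq hmL2 hlL2).trans
      (by gcongr)
  exact abs_sub_mul_div_add_le hcross hm0 hηm hVarV

/-- If `Var(V) > 0`, `E[(Δm̂(X))²] ≤ η_m`, and `E[(Δℓ̂(X))²] ≤ η_ℓ`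
for nonnegative reals `η_m, η_ℓ`, then the DML bias
`B_DML := (E[Δm̂(X)·Δℓ̂(X)] − θ·E[(Δm̂(X))²]) / (Var(V) + E[(Δm̂(X))²])` satisfies
`|B_DML| ≤ (√(η_m·η_ℓ) + |θ|·η_m) / Var(V)`. -/
theorem dml_bias_bound_consistency
    {Ω : Type*} [MeasureSpace Ω] [IsProbabilityMeasure (ℙ : Measure Ω)]
    {d : ℕ} (X : Ω → (Fin d → ℝ)) (D Y θ' U V : Ω → ℝ)
    (g m mhat lhat : (Fin d → ℝ) → ℝ) (θ : ℝ) (C₃ C₄ : ℝ)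
    (hXm : Measurable X) (hDm : Measurable D) (hYm : Measurable Y)
    (hθ'm : Measurable θ') (hUm : Measurable U) (hVm : Measurable V)
    (hg : Measurable g) (hm : Measurable m)
    (hmhat : Measurable mhat) (hlhat : Measurable lhat)
    (hmodelY : ∀ ω, Y ω = g (X ω) + D ω * θ' ω + U ω)
    (hmodelD : ∀ ω, D ω = m (X ω) + V ω)
    (hindep : iIndepFun ![U, V, θ'] ℙ)
    (hindepX : IndepFun X (fun ω => (U ω, V ω, θ' ω)) ℙ)
    (hEU : 𝔼[U] = 0) (hEV : 𝔼[V] = 0) (hEθ : 𝔼[θ'] = θ)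
    -- `ℓ(x) := g(x) + θ·m(x)`, `Δm̂(x) := m(x) − m̂(x)`, `Δℓ̂(x) := ℓ(x) − ℓ̂(x)`.
    (ℓ Δmhat Δlhat : (Fin d → ℝ) → ℝ)
    (hℓ : ∀ x, ℓ x = g x + θ * m x)
    (hΔm : ∀ x, Δmhat x = m x - mhat x)
    (hΔl : ∀ x, Δlhat x = ℓ x - lhat x)
    (hbΔm : ∀ᵐ ω, |Δmhat (X ω)| ≤ C₃) (hbΔl : ∀ᵐ ω, |Δlhat (X ω)| ≤ C₄)
    (ηm ηl : ℝ) (hηm0 : 0 ≤ ηm) (hηl0 : 0 ≤ ηl)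
    (hVarV : 0 < Var[V])
    (hηm : 𝔼[fun ω => (Δmhat (X ω)) ^ 2] ≤ ηm)
    (hηl : 𝔼[fun ω => (Δlhat (X ω)) ^ 2] ≤ ηl) :
    |(𝔼[fun ω => Δmhat (X ω) * Δlhat (X ω)] - θ * 𝔼[fun ω => (Δmhat (X ω)) ^ 2])
        / (Var[V] + 𝔼[fun ω => (Δmhat (X ω)) ^ 2])|
      ≤ (Real.sqrt (ηm * ηl) + |θ| * ηm) / Var[V] :=
  dml_bias_bound_consistency_general X V g m mhat lhat θ C₃ C₄ hXm hg hm hmhat hlhat ℓ Δmhat Δlhat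
    hℓ hΔm hΔl hbΔm hbΔl ηm ηl hVarV hηm hηl
end
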